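/- Define d(y,z,v) := min_{x∈X} F(x,y,z,v). Then d(·,z,v) is continuously differentiable with ∇_y d(y,z,v) = ∇_y F(x(y,z,v),y,z,v), and ∇_y d(·,z,v) is Lipschitz with constant L_d = L_y·σ₁ + L_y + r₂, where σ₁ = (L_y + r₁ − L_x)/(r₁ − L_x). -/

import Mathlib

/-!
Danskin's argument. As `x(t)` minimizes `F(·, t)` over `X`,
`F(x(t), t) - F(x(t), y) ≤ d(t) - d(y) ≤ F(x(y), t) - F(x(y), y)`, and both sides are
`⟪∇_y F(x(y), y), t - y⟫ + O(‖t - y‖²)`: the gradient of `F(x, ·)` is `(L_y + r₂)`-Lipschitz,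
and `∇_y F(x(t), y)` is `L_y σ₁ ‖t - y‖`-close to `∇_y F(x(y), y)` because the minimizer is
`σ₁`-Lipschitz. The latter holds since `∇_x F(·, y)` is `(r₁ - L_x)`-strongly monotone and
moves by at most `L_y ‖y - y'‖` with `y`: as the mixed partials of `f` agree, the Lipschitz
constant of `∇_y f` in `x` also bounds `∇_x f` in `y`.
-/

open scoped RealInnerProductSpace
open Set Filter Asymptotics InnerProductSpace Topology

theorem nonneg_of_norm_sub_le_mul_norm_sub {α V : Type*} [NormedAddCommGroup α] [Nontrivial α]
    [SeminormedAddCommGroup V] {g : α → V} {L : ℝ} (hg : ∀ a b, ‖g a - g b‖ ≤ L * ‖a - b‖) :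
    0 ≤ L := by
  obtain ⟨a, ha⟩ := exists_ne (0 : α)
  exact nonneg_of_mul_nonneg_left ((norm_nonneg _).trans (hg a 0)) (by simpa using ha)

theorem isLittleO_of_abs_le_mul_norm_sub_sq {F : Type*} [NormedAddCommGroup F] {e : F → ℝ}
    {y : F} {C : ℝ} (he : ∀ t, |e t| ≤ C * ‖t - y‖ ^ 2) : e =o[𝓝 y] fun t => t - y := by
  refine (IsBigO.of_bound C (Eventually.of_forall fun t => ?_)).trans_isLittleO
    ((isLittleO_norm_pow_id one_lt_two).comp_tendsto (tendsto_sub_nhds_zero_iff.2 tendsto_id))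
  simpa using he t

section Gradient

variable {F : Type*} [NormedAddCommGroup F] [InnerProductSpace ℝ F]

theorem sub_mul_norm_sub_sq_le_inner_add_smul_sub {G : F → F} {L : ℝ} (r : ℝ) {w w' : F}
    (hG : ‖G w - G w'‖ ≤ L * ‖w - w'‖) (z : F) :
    (r - L) * ‖w - w'‖ ^ 2 ≤ ⟪(G w + r • (w - z)) - (G w' + r • (w' - z)), w - w'⟫ := by
  have hinner : -(‖G w - G w'‖ * ‖w - w'‖) ≤ ⟪G w - G w', w - w'⟫ :=
    neg_le_of_abs_le (abs_real_inner_le_norm _ _)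
  have hsplit : G w + r • (w - z) - (G w' + r • (w' - z)) = (G w - G w') + r • (w - w') := by
    module
  rw [hsplit, inner_add_left, real_inner_smul_left, real_inner_self_eq_norm_sq]
  nlinarith [mul_le_mul_of_nonneg_right hG (norm_nonneg (w - w'))]

variable [CompleteSpace F] {g h : F → ℝ} {G H x y : F}

theorem hasGradientAt_of_subsingleton [Subsingleton F] (g : F → ℝ) (G x : F) :
    HasGradientAt g G x := by
  have hg : g = fun _ => g x := funext fun w => congrArg g (Subsingleton.elim w x)
  rw [Subsingleton.elim G 0, hg]
  exact hasGradientAt_const x (g x)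

theorem HasGradientAt.add (hg : HasGradientAt g G x) (hh : HasGradientAt h H x) :
    HasGradientAt (fun t => g t + h t) (G + H) x := by
  rw [hasGradientAt_iff_hasFDerivAt, map_add]
  exact hg.hasFDerivAt.add hh.hasFDerivAt

theorem HasGradientAt.sub (hg : HasGradientAt g G x) (hh : HasGradientAt h H x) :
    HasGradientAt (fun t => g t - h t) (G - H) x := by
  rw [hasGradientAt_iff_hasFDerivAt, map_sub]
  exact hg.hasFDerivAt.sub hh.hasFDerivAt

theorem hasGradientAt_inner_left (a x : F) : HasGradientAt (fun t => ⟪a, t⟫) a x :=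
  (toDual ℝ F a).hasFDerivAt

theorem hasGradientAt_half_mul_norm_sub_sq (r : ℝ) (z x : F) :
    HasGradientAt (fun t => r / 2 * ‖t - z‖ ^ 2) (r • (x - z)) x := by
  refine (((hasFDerivAt_id x).sub_const z).norm_sq.const_mul (r / 2)).congr_fderiv ?_
  ext w
  simp
  ring

theorem HasGradientAt.add_half_mul_norm_sub_sq_sub_const (hg : HasGradientAt g G x) (r : ℝ)
    (z : F) (c : ℝ) :
    HasGradientAt (fun t => g t + r / 2 * ‖t - z‖ ^ 2 - c) (G + r • (x - z)) x := by
  simpa only [sub_zero] using (hg.add (hasGradientAt_half_mul_norm_sub_sq r z x)).sub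
    (hasGradientAt_const x c)

theorem HasGradientAt.add_const_sub_half_mul_norm_sub_sq (hg : HasGradientAt g G x) (c r : ℝ)
    (v : F) : HasGradientAt (fun t => g t + c - r / 2 * ‖t - v‖ ^ 2) (G - r • (x - v)) x := by
  simpa only [add_zero] using (hg.add (hasGradientAt_const x c)).sub
    (hasGradientAt_half_mul_norm_sub_sq r v x)

theorem abs_sub_sub_inner_le_of_lipschitz_gradient {C : ℝ} (hC : 0 ≤ C) {G : F → F}
    (hg : ∀ w, HasGradientAt g (G w) w) (hG : ∀ w w', ‖G w - G w'‖ ≤ C * ‖w - w'‖) (x y : F) :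
    |g y - g x - ⟪G x, y - x⟫| ≤ C * ‖y - x‖ ^ 2 := by
  have key := (convex_closedBall x ‖y - x‖).norm_image_sub_le_of_norm_hasFDerivWithin_le
    (fun w _ => ((hg w).sub (hasGradientAt_inner_left (G x) w)).hasFDerivAt.hasFDerivWithinAt)
    (C := C * ‖y - x‖)
    (fun w hw => by
      rw [LinearIsometryEquiv.norm_map]
      exact (hG w x).trans (mul_le_mul_of_nonneg_left (mem_closedBall_iff_norm.1 hw) hC))
    (Metric.mem_closedBall_self (norm_nonneg _)) (mem_closedBall_iff_norm.2 le_rfl)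
  rw [← Real.norm_eq_abs]
  convert key using 1
  · rw [inner_sub_right]; ring_nf
  · ring

theorem IsMinOn.inner_sub_nonneg {X : Set F} (hX : Convex ℝ X) (hmin : IsMinOn g X x)
    (hg : HasGradientAt g G x) (hx : x ∈ X) (hy : y ∈ X) : 0 ≤ ⟪G, y - x⟫ := by
  simpa [toDual_apply_apply] using hmin.localize.hasFDerivWithinAt_nonneg
    hg.hasFDerivAt.hasFDerivWithinAt
    (sub_mem_posTangentConeAt_of_segment_subset (hX.segment_subset hx hy))

theorem norm_sub_le_of_isMinOn_of_strongly_monotone {X : Set F} (hX : Convex ℝ X) {μ δ : ℝ}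
    (hμ : 0 < μ) {Gg Gh : F → F}
    (hmono : ∀ w ∈ X, ∀ w' ∈ X, μ * ‖w - w'‖ ^ 2 ≤ ⟪Gg w - Gg w', w - w'⟫)
    (hGg : HasGradientAt g (Gg y) y) (hGh : HasGradientAt h (Gh x) x)
    (hclose : ‖Gg x - Gh x‖ ≤ δ) (hy : y ∈ X) (hx : x ∈ X)
    (hgmin : IsMinOn g X y) (hhmin : IsMinOn h X x) : ‖y - x‖ ≤ δ / μ := by
  have hoptg := hgmin.inner_sub_nonneg hX hGg hy hx
  have hopth := hhmin.inner_sub_nonneg hX hGh hx hy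
  have hcs : ⟪Gh x - Gg x, y - x⟫ ≤ δ * ‖y - x‖ :=
    (real_inner_le_norm _ _).trans (mul_le_mul_of_nonneg_right
      (by rwa [norm_sub_rev]) (norm_nonneg _))
  have hquad : μ * ‖y - x‖ ^ 2 ≤ δ * ‖y - x‖ := by
    have := hmono y hy x hx
    rw [← neg_sub y x, inner_neg_right] at hoptg
    simp only [inner_sub_left] at this hcs hopth
    linarith
  rw [le_div_iff₀ hμ]
  rcases (norm_nonneg (y - x)).eq_or_lt with h0 | hpos
  · rw [← h0, zero_mul]; exact (norm_nonneg _).trans hclose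
  · nlinarith

end Gradient

section Danskin

variable {ι F : Type*} [NormedAddCommGroup F] [InnerProductSpace ℝ F] [CompleteSpace F]

theorem hasGradientAt_of_isMinOn_of_quadratic_bound {Φ : ι → F → ℝ} {G : ι → F → F}
    {X : Set ι} {m : F → ι} {y : F} {C K : ℝ} (hmX : ∀ t, m t ∈ X)
    (hmin : ∀ t, IsMinOn (fun x => Φ x t) X (m t))
    (hΦ : ∀ x ∈ X, ∀ t, |Φ x t - Φ x y - ⟪G x y, t - y⟫| ≤ C * ‖t - y‖ ^ 2)
    (hG : ∀ t, ‖G (m t) y - G (m y) y‖ ≤ K * ‖t - y‖) :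
    HasGradientAt (fun t => Φ (m t) t) (G (m y) y) y := by
  rw [hasGradientAt_iff_isLittleO]
  refine isLittleO_of_abs_le_mul_norm_sub_sq (C := C + K) fun t => abs_le.2 ⟨?_, ?_⟩
  · have hlow := (abs_le.1 (hΦ _ (hmX t) t)).1
    have hmin_y : Φ (m y) y ≤ Φ (m t) y := hmin y (hmX t)
    have hcross : ⟪G (m y) y - G (m t) y, t - y⟫ ≤ K * ‖t - y‖ ^ 2 := by
      rw [sq, ← mul_assoc]
      refine (real_inner_le_norm _ _).trans (mul_le_mul_of_nonneg_right ?_ (norm_nonneg _))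
      exact norm_sub_rev (G (m y) y) _ ▸ hG t
    rw [inner_sub_left] at hcross
    linarith
  · have hup := (abs_le.1 (hΦ _ (hmX y) t)).2
    have hmin_t : Φ (m t) t ≤ Φ (m y) t := hmin t (hmX y)
    have hK : 0 ≤ K * ‖t - y‖ ^ 2 := by
      rw [sq, ← mul_assoc]
      exact mul_nonneg ((norm_nonneg _).trans (hG t)) (norm_nonneg _)
    linarith

end Danskin

theorem norm_sub_smul_sub_le_of_lipschitz {E D : Type*} [NormedAddCommGroup E]
    [NormedAddCommGroup D] [NormedSpace ℝ D] {gy : E → D → D} {L r : ℝ} (hr : 0 ≤ r)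
    (hLip : ∀ x x' y y', ‖gy x y - gy x' y'‖ ≤ L * (‖x - x'‖ + ‖y - y'‖))
    (x x' : E) (y y' v : D) :
    ‖(gy x y - r • (y - v)) - (gy x' y' - r • (y' - v))‖ ≤
      L * (‖x - x'‖ + ‖y - y'‖) + r * ‖y - y'‖ := by
  calc _ = ‖(gy x y - gy x' y') - r • (y - y')‖ := by rw [smul_sub, smul_sub, smul_sub]; abel_nf
    _ ≤ ‖gy x y - gy x' y'‖ + ‖r • (y - y')‖ := norm_sub_le _ _
    _ ≤ _ := by rw [norm_smul, Real.norm_of_nonneg hr]; exact add_le_add_left (hLip x x' y y') _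

section Prox

variable {E D : Type*} [NormedAddCommGroup E] [InnerProductSpace ℝ E] [CompleteSpace E]
  [NormedAddCommGroup D] [InnerProductSpace ℝ D] [CompleteSpace D]
  {f : E → D → ℝ} {gx : E → D → E} {gy : E → D → D} {Lx Ly r₁ r₂ : ℝ}

theorem norm_sub_le_of_lipschitz_gradient_snd (hLy : 0 ≤ Ly)
    (hgradx : ∀ x y, HasGradientAt (fun x' => f x' y) (gx x y) x)
    (hgrady : ∀ x y, HasGradientAt (fun y' => f x y') (gy x y) y)
    (hLipy : ∀ x x' y, ‖gy x y - gy x' y‖ ≤ Ly * ‖x - x'‖) (x : E) (y y' : D) :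
    ‖gx x y - gx x y'‖ ≤ Ly * ‖y - y'‖ := by
  -- `x ↦ f x y - f x y'` is `Ly ‖y - y'‖`-Lipschitz by the mean value inequality in `y`.
  rw [← (toDual ℝ E).norm_map]
  refine ((hgradx x y).sub (hgradx x y')).hasFDerivAt.le_of_lip' (by positivity)
    (Eventually.of_forall fun x' => ?_)
  have := (convex_univ (𝕜 := ℝ)).norm_image_sub_le_of_norm_hasFDerivWithin_le
    (fun w _ => ((hgrady x' w).sub (hgrady x w)).hasFDerivAt.hasFDerivWithinAt)
    (fun w _ => by rw [LinearIsometryEquiv.norm_map]; exact hLipy x' x w)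
    (mem_univ y') (mem_univ y)
  calc _ = ‖(f x' y - f x y) - (f x' y' - f x y')‖ := by ring_nf
    _ ≤ Ly * ‖x' - x‖ * ‖y - y'‖ := this
    _ = _ := by ring

theorem norm_sub_le_of_isMinOn_prox {X : Set E} (hX : Convex ℝ X) (hr₁ : Lx < r₁)
    (hLy : 0 ≤ Ly) (hgradx : ∀ x y, HasGradientAt (fun x' => f x' y) (gx x y) x)
    (hgrady : ∀ x y, HasGradientAt (fun y' => f x y') (gy x y) y)
    (hLipx : ∀ x x' y, ‖gx x y - gx x' y‖ ≤ Lx * ‖x - x'‖)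
    (hLipy : ∀ x x' y, ‖gy x y - gy x' y‖ ≤ Ly * ‖x - x'‖) {a b : E} {y y' : D} {z : E} {v : D}
    (ha : a ∈ X ∧ IsMinOn (fun x => f x y + r₁ / 2 * ‖x - z‖ ^ 2 - r₂ / 2 * ‖y - v‖ ^ 2) X a)
    (hb : b ∈ X ∧ IsMinOn (fun x => f x y' + r₁ / 2 * ‖x - z‖ ^ 2 - r₂ / 2 * ‖y' - v‖ ^ 2) X b) :
    ‖a - b‖ ≤ Ly * ‖y - y'‖ / (r₁ - Lx) := by
  refine norm_sub_le_of_isMinOn_of_strongly_monotone hX (sub_pos.2 hr₁)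
    (Gg := fun w => gx w y + r₁ • (w - z)) (Gh := fun w => gx w y' + r₁ • (w - z))
    (fun w _ w' _ => sub_mul_norm_sub_sq_le_inner_add_smul_sub (G := fun w => gx w y) r₁
      (hLipx w w' y) z)
    ((hgradx a y).add_half_mul_norm_sub_sq_sub_const r₁ z _)
    ((hgradx b y').add_half_mul_norm_sub_sq_sub_const r₁ z _)
    ?_ ha.1 hb.1 ha.2 hb.2
  rw [add_sub_add_right_eq_sub]
  exact norm_sub_le_of_lipschitz_gradient_snd hLy hgradx hgrady hLipy b y y'

end Prox

theorem stmt_6_general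
    {E D : Type*} [NormedAddCommGroup E] [InnerProductSpace ℝ E] [CompleteSpace E]
    [NormedAddCommGroup D] [InnerProductSpace ℝ D] [CompleteSpace D]
    (f : E → D → ℝ) (gx : E → D → E) (gy : E → D → D) (Lx Ly r₁ r₂ : ℝ)
    (hr₁ : r₁ > Lx) (hr₂ : r₂ > 0)
    (X : Set E) (Y : Set D)
    (hXconv : Convex ℝ X)
    (hgradx : ∀ x y, HasGradientAt (fun x' => f x' y) (gx x y) x)
    (hgrady : ∀ x y, HasGradientAt (fun y' => f x y') (gy x y) y)
    (hLipx : ∀ x x' y y', ‖gx x y - gx x' y'‖ ≤ Lx * (‖x - x'‖ + ‖y - y'‖))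
    (hLipy : ∀ x x' y y', ‖gy x y - gy x' y'‖ ≤ Ly * (‖x - x'‖ + ‖y - y'‖))
    (F : E → D → E → D → ℝ)
    (hF : ∀ x y z v, F x y z v
      = f x y + r₁ / 2 * ‖x - z‖ ^ 2 - r₂ / 2 * ‖y - v‖ ^ 2)
    (xm : D → E → D → E)
    (hxm : ∀ y z v, xm y z v ∈ X ∧ IsMinOn (fun x => F x y z v) X (xm y z v))
    (d : D → E → D → ℝ)
    (hd : ∀ y z v, d y z v = F (xm y z v) y z v) :
    (∀ (y : D) (z : E) (v : D),
      HasGradientAt (fun y' => d y' z v) (gy (xm y z v) y - r₂ • (y - v)) y) ∧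
    (∀ (z : E) (v : D), ∀ y ∈ Y, ∀ y' ∈ Y,
      ‖(gy (xm y z v) y - r₂ • (y - v)) - (gy (xm y' z v) y' - r₂ • (y' - v))‖ ≤
        (Ly * ((Ly + r₁ - Lx) / (r₁ - Lx)) + Ly + r₂) * ‖y - y'‖) := by
  simp only [hF] at hxm hd
  rcases subsingleton_or_nontrivial D with hD | hD
  · exact ⟨fun y z v => hasGradientAt_of_subsingleton _ _ _,
      fun z v y _ y' _ => by simp [Subsingleton.elim y y']⟩
  have hLy : 0 ≤ Ly := nonneg_of_norm_sub_le_mul_norm_sub (g := gy 0) fun y y' => by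
    simpa using hLipy 0 0 y y'
  set σ₁ := (Ly + r₁ - Lx) / (r₁ - Lx)
  have hσ₁ : ∀ z v y y', ‖xm y z v - xm y' z v‖ ≤ σ₁ * ‖y - y'‖ := by
    intro z v y y'
    refine (norm_sub_le_of_isMinOn_prox hXconv hr₁ hLy hgradx hgrady
      (fun x x' y => by simpa using hLipx x x' y y) (fun x x' y => by simpa using hLipy x x' y y)
      (hxm y z v) (hxm y' z v)).trans ?_
    rw [div_mul_eq_mul_div]
    gcongr
    linarith
  have hgradF_lip := norm_sub_smul_sub_le_of_lipschitz hr₂.le hLipy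
  refine ⟨fun y z v => ?_, fun z v y _ y' _ => ?_⟩
  · simp only [hd]
    refine hasGradientAt_of_isMinOn_of_quadratic_bound (G := fun x w => gy x w - r₂ • (w - v))
      (K := Ly * σ₁) (fun t => (hxm t z v).1) (fun t => (hxm t z v).2)
      (fun x _ t => abs_sub_sub_inner_le_of_lipschitz_gradient (add_nonneg hLy hr₂.le)
        (fun w => (hgrady x w).add_const_sub_half_mul_norm_sub_sq _ r₂ v) (fun w w' => ?_) y t)
      (fun t => ?_)
    · exact (hgradF_lip x x w w' v).trans_eq (by rw [sub_self, norm_zero, zero_add]; ring)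
    · calc _ ≤ Ly * (‖xm t z v - xm y z v‖ + ‖y - y‖) + r₂ * ‖y - y‖ := hgradF_lip _ _ y y v
        _ ≤ Ly * (σ₁ * ‖t - y‖) := by simpa using mul_le_mul_of_nonneg_left (hσ₁ z v t y) hLy
        _ = _ := by ring
  · calc _ ≤ Ly * (‖xm y z v - xm y' z v‖ + ‖y - y'‖) + r₂ * ‖y - y'‖ := hgradF_lip _ _ y y' v
      _ ≤ Ly * (σ₁ * ‖y - y'‖ + ‖y - y'‖) + r₂ * ‖y - y'‖ := by grw [hσ₁ z v y y']
      _ = _ := by ring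

/-- the dual function `d(y,z,v) = min_{x∈X} F(x,y,z,v)` is differentiable
in `y` with `∇_y d(y,z,v) = ∇_y F(x(y,z,v),y,z,v) = ∇_y f(x(y,z,v),y) − r₂ • (y−v)`,
and this gradient is `L_d`-Lipschitz on `Y` with
`L_d = L_y σ₁ + L_y + r₂`, `σ₁ = (L_y + r₁ − L_x)/(r₁ − L_x)`. -/
theorem stmt_6
    {E D : Type*} [NormedAddCommGroup E] [InnerProductSpace ℝ E] [CompleteSpace E]
    [NormedAddCommGroup D] [InnerProductSpace ℝ D] [CompleteSpace D]
    (f : E → D → ℝ) (gx : E → D → E) (gy : E → D → D) (Lx Ly r₁ r₂ : ℝ)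
    (hr₁ : r₁ > Lx) (hr₂ : r₂ > 0)
    (X : Set E) (Y : Set D)
    (hXc : IsCompact X) (hXconv : Convex ℝ X) (hXne : X.Nonempty)
    (hYc : IsCompact Y) (hYconv : Convex ℝ Y) (hYne : Y.Nonempty)
    (hgradx : ∀ x y, HasGradientAt (fun x' => f x' y) (gx x y) x)
    (hgrady : ∀ x y, HasGradientAt (fun y' => f x y') (gy x y) y)
    (hLipx : ∀ x x' y y', ‖gx x y - gx x' y'‖ ≤ Lx * (‖x - x'‖ + ‖y - y'‖))
    (hLipy : ∀ x x' y y', ‖gy x y - gy x' y'‖ ≤ Ly * (‖x - x'‖ + ‖y - y'‖))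
    (F : E → D → E → D → ℝ)
    (hF : ∀ x y z v, F x y z v
      = f x y + r₁ / 2 * ‖x - z‖ ^ 2 - r₂ / 2 * ‖y - v‖ ^ 2)
    (xm : D → E → D → E)
    (hxm : ∀ y z v, xm y z v ∈ X ∧ IsMinOn (fun x => F x y z v) X (xm y z v))
    (d : D → E → D → ℝ)
    (hd : ∀ y z v, d y z v = F (xm y z v) y z v) :
    (∀ (y : D) (z : E) (v : D),
      HasGradientAt (fun y' => d y' z v) (gy (xm y z v) y - r₂ • (y - v)) y) ∧
    (∀ (z : E) (v : D), ∀ y ∈ Y, ∀ y' ∈ Y,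
      ‖(gy (xm y z v) y - r₂ • (y - v)) - (gy (xm y' z v) y' - r₂ • (y' - v))‖ ≤
        (Ly * ((Ly + r₁ - Lx) / (r₁ - Lx)) + Ly + r₂) * ‖y - y'‖) :=
  stmt_6_general f gx gy Lx Ly r₁ r₂ hr₁ hr₂ X Y hXconv hgradx hgrady hLipx hLipy F hF xm hxm d hd
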